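/- Let G be a finite 2-group with abelianization isomorphic to the Klein four-group. If G admits an automorphism σ of order 3 such that x·σ(x)·σ²(x) ∈ [G,G] for all x ∈ G, then G is isomorphic to the Klein four-group ℤ/2 × ℤ/2 or to the quaternion group Q₈. -/

import Mathlib

/-!
Induction on `|G|`. If `G` is nonabelian, `N = [G, G] ⊓ Z(G)` is a nontrivial characteristic
subgroup contained in `[G, G]`, so `G ⧸ N` satisfies the same hypotheses with the induced
automorphism and is `V₄` or `Q₈` by induction; in both cases `[G, G]` is central.

For `G` of class two with `G/[G, G] ≅ V₄`, the trace condition prevents `σ` from fixing a nontrivial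
coset `a[G, G]`, so `a` and `σ a` generate `G` modulo the centre. Hence `[G, G] = ⟨c⟩` with
`c = ⁅σ a, a⁆` of order two, fixed by `σ`. Computing `(a · σ a)²` once by the class-two squaring
formula and once as `(t · (σ² a)⁻¹)²` with `t = a · σ a · σ² a` central gives `a² = c = (σ a)²`:
these are the defining relations of `Q₈`.
-/

open Subgroup
open scoped commutatorElement

section GroupLemmas

variable {G : Type*} [Group G]

theorem commutatorElement_sq_right {x y : G} (h : Commute ⁅x, y⁆ y) :
    ⁅x, y ^ 2⁆ = ⁅x, y⁆ ^ 2 := by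
  have hconj : x * y * x⁻¹ = ⁅x, y⁆ * y := by rw [commutatorElement_def]; group
  rw [commutatorElement_def x, ← conj_pow, hconj, h.mul_pow, mul_inv_cancel_right]

theorem mul_sq_of_commute_commutatorElement {x y : G} (h : Commute ⁅y, x⁆ x) :
    (x * y) ^ 2 = ⁅y, x⁆ * x ^ 2 * y ^ 2 := by
  have hyx : y * x = ⁅y, x⁆ * x * y := by rw [commutatorElement_def]; group
  calc (x * y) ^ 2 = x * (y * x) * y := by rw [sq]; group
    _ = ⁅y, x⁆ * x ^ 2 * y ^ 2 := by
      rw [hyx, ← mul_assoc x, ← mul_assoc x, ← h.eq]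
      simp only [sq, mul_assoc]

theorem commutatorElement_sq_eq_one_of_commutator_le_center (hcen : commutator G ≤ center G)
    {x y : G} (hx : x ^ 2 ∈ commutator G) : ⁅y, x⁆ ^ 2 = 1 := by
  have hc : ⁅y, x⁆ ∈ center G := hcen (commutator_mem_commutator (mem_top _) (mem_top _))
  rw [← commutatorElement_sq_right (mem_center_iff.mp hc x).symm,
    commutatorElement_eq_one_iff_commute]
  exact mem_center_iff.mp (hcen hx) y

theorem eq_one_or_eq_of_mem_zpowers {c u : G} (hc : c ^ 2 = 1) (hu : u ∈ zpowers c) :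
    u = 1 ∨ u = c := by
  obtain ⟨k, rfl⟩ := mem_zpowers_iff.mp hu
  rcases Int.even_or_odd' k with ⟨m, rfl | rfl⟩
  · left; rw [zpow_mul, zpow_two, ← sq, hc, one_zpow]
  · right; rw [zpow_add, zpow_mul, zpow_two, ← sq, hc, one_zpow, one_mul, zpow_one]

theorem mul_pow_eq_inv_mul_of_conj_eq_inv {x y : G} (hyx : y * x * y⁻¹ = x⁻¹) (m : ℕ) :
    y * x ^ m = (x ^ m)⁻¹ * y := by
  rw [← mul_inv_eq_iff_eq_mul, ← conj_pow, hyx, inv_pow]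

theorem map_commutator_of_surjective {H : Type*} [Group H] {f : G →* H}
    (hf : Function.Surjective f) : (commutator G).map f = commutator H := by
  rw [map_commutator_eq, f.range_eq_top.mpr hf, commutator_def]

theorem MonoidHom.closure_sup_ker_eq_top {H : Type*} [Group H] (f : G →* H) {S : Set G}
    (h : closure (f '' S) = ⊤) : closure S ⊔ f.ker = ⊤ := by
  rw [← comap_map_eq, MonoidHom.map_closure, h, comap_top]

theorem mem_center_of_forall_commute {N : Subgroup G} (hN : N ≤ center G) {S : Set G}
    (hS : closure S ⊔ N = ⊤) {u : G} (hu : ∀ s ∈ S, Commute u s) : u ∈ center G := by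
  have hcent : ⊤ ≤ centralizer {u} := hS ▸ sup_le
    ((closure_le _).mpr fun s hs => mem_centralizer_singleton_iff.mpr (hu s hs).eq.symm)
    (hN.trans (center_le_centralizer _))
  exact mem_center_iff.mpr fun g => mem_centralizer_singleton_iff.mp (hcent (mem_top g))

theorem map_le_center_of_surjective {H : Type*} [Group H] {f : G →* H}
    (hf : Function.Surjective f) {N : Subgroup G} (hN : N ≤ center G) :
    N.map f ≤ center H := by
  rintro _ ⟨z, hz, rfl⟩
  refine mem_center_iff.mpr fun q => ?_
  obtain ⟨g, rfl⟩ := hf q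
  rw [← map_mul, ← map_mul, mem_center_iff.mp (hN hz) g]

theorem commute_of_map_mem_zpowers {H : Type*} [Group H] {f : G →* H} (hf : f.ker ≤ center G)
    {u a : G} (h : f u ∈ zpowers (f a)) : Commute u a := by
  obtain ⟨k, hk⟩ := mem_zpowers_iff.mp h
  have hmem : (a ^ k)⁻¹ * u ∈ center G :=
    hf (by rw [MonoidHom.mem_ker, map_mul, map_inv, map_zpow, hk, inv_mul_cancel])
  rw [← mul_inv_cancel_left (a ^ k) u]
  exact ((Commute.self_zpow a k).symm).mul_left (mem_center_iff.mp hmem a).symm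

theorem isMulCommutative_of_closure_sup_eq_top {N : Subgroup G} (hN : N ≤ center G) {S : Set G}
    (hS : ∀ x ∈ S, ∀ y ∈ S, Commute x y) (h : closure S ⊔ N = ⊤) : IsMulCommutative G := by
  have hSZ : closure S ≤ center G :=
    (closure_le _).mpr fun x hx => mem_center_of_forall_commute hN h (hS x hx)
  rw [← commutator_eq_bot_iff, commutator_eq_bot_iff_center_eq_top, eq_top_iff, ← h]
  exact sup_le hSZ hN

theorem commutator_eq_zpowers_of_closure_pair_sup_eq_top {N : Subgroup G} (hN : N ≤ center G)
    {a b : G} (h : closure {a, b} ⊔ N = ⊤) (hc : ⁅a, b⁆ ∈ center G) :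
    commutator G = zpowers ⁅a, b⁆ := by
  have hcN : zpowers ⁅a, b⁆ ≤ center G := zpowers_le.mpr hc
  have : (zpowers ⁅a, b⁆).Normal := commutator_top_left_le_iff.mp
    ((commutator_top_left_eq_bot_iff_le_center.mpr hcN).le.trans bot_le)
  refine le_antisymm (Normal.quotient_commutative_iff_commutator_le.mp ?_)
    (zpowers_le.mpr (commutator_mem_commutator (mem_top a) (mem_top b)))
  set π := QuotientGroup.mk' (zpowers ⁅a, b⁆)
  have hπ : Function.Surjective π := QuotientGroup.mk'_surjective _
  have hab : Commute (π a) (π b) := by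
    rw [← commutatorElement_eq_one_iff_commute, ← map_commutatorElement, QuotientGroup.mk'_apply,
      QuotientGroup.eq_one_iff]
    exact mem_zpowers _
  refine isMulCommutative_of_closure_sup_eq_top (map_le_center_of_surjective hπ hN)
    (S := {π a, π b}) ?_ ?_
  · rintro _ (rfl | rfl) _ (rfl | rfl)
    exacts [Commute.refl _, hab, hab.symm, Commute.refl _]
  · rw [← Set.image_pair, ← MonoidHom.map_closure, ← Subgroup.map_sup, h,
      map_top_of_surjective _ hπ]

theorem closure_pair_eq_top_of_card_eq_four {H : Type*} [Group H] (hH : Nat.card H = 4)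
    {x y : H} (hx : x ≠ 1) (hy : y ≠ 1) (hxy : x ≠ y) : closure {x, y} = ⊤ := by
  have : Finite H := Nat.finite_of_card_ne_zero (by rw [hH]; norm_num)
  set K := closure {x, y}
  have h3 : 3 ≤ Nat.card K := by
    have hsub : ({1, x, y} : Set H) ⊆ K :=
      Set.insert_subset (one_mem K) (subset_closure)
    calc 3 = ({1, x, y} : Set H).ncard :=
          (Set.ncard_eq_three.mpr ⟨1, x, y, hx.symm, hy.symm, hxy, rfl⟩).symm
      _ ≤ (K : Set H).ncard := Set.ncard_le_ncard hsub
      _ = Nat.card K := Nat.card_coe_set_eq _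
  have hdvd : Nat.card K ∣ 4 := hH ▸ K.card_subgroup_dvd_card
  have h4 : Nat.card K = 4 := by
    have hle := Nat.le_of_dvd (by norm_num) hdvd
    interval_cases h : Nat.card K <;> simp_all
  exact K.eq_top_of_card_eq (h4.trans hH.symm)

theorem card_quotient_lt [Finite G] {N : Subgroup G} [N.Normal] (hN : N ≠ ⊥) :
    Nat.card (G ⧸ N) < Nat.card G := by
  rw [card_eq_card_quotient_mul_card_subgroup N]
  exact (Nat.lt_mul_iff_one_lt_right Nat.card_pos).mpr (N.one_lt_card_iff_ne_bot.mpr hN)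

theorem commutator_inf_center_ne_bot [Group.IsNilpotent G] (h : commutator G ≠ ⊥) :
    commutator G ⊓ center G ≠ ⊥ := by
  set k := Group.nilpotencyClass G
  have hk : 2 ≤ k := by
    by_contra! hk
    exact h (Subgroup.lowerCentralSeries_eq_bot_iff_nilpotencyClass_le.mpr (by omega : k ≤ 1))
  set M := (⊤ : Subgroup G).lowerCentralSeries (k - 1)
  have hM : M ≠ ⊥ := fun hM => by
    have := Subgroup.lowerCentralSeries_eq_bot_iff_nilpotencyClass_le.mp hM
    omega
  have hMG' : M ≤ commutator G :=
    top_lowerCentralSeries_one (G := G) ▸ Subgroup.lowerCentralSeries_antitone _ (by omega)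
  have hMZ : M ≤ center G := by
    rw [← commutator_top_right_eq_bot_iff_le_center, ← Subgroup.lowerCentralSeries_succ,
      Nat.sub_add_cancel (by omega), Subgroup.lowerCentralSeries_nilpotencyClass]
  exact ne_bot_of_le_ne_bot hM (le_inf hMG' hMZ)

def Abelianization.quotientMulEquiv {N : Subgroup G} [N.Normal] (hN : N ≤ commutator G) :
    Abelianization (G ⧸ N) ≃* Abelianization G :=
  (QuotientGroup.quotientMulEquivOfEq
      (map_commutator_of_surjective (QuotientGroup.mk'_surjective N)).symm).trans
    (QuotientGroup.quotientQuotientEquivQuotient N (commutator G) hN)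

end GroupLemmas

section ZModPow

variable {G : Type*} [Group G] {n : ℕ} {x : G}

theorem pow_zmod_val_natCast (hx : x ^ n = 1) (k : ℕ) : x ^ (k : ZMod n).val = x ^ k := by
  rw [ZMod.val_natCast, ← pow_eq_pow_mod _ hx]

variable [NeZero n]

theorem pow_zmod_val_add (hx : x ^ n = 1) (i j : ZMod n) :
    x ^ (i + j).val = x ^ i.val * x ^ j.val := by
  rw [ZMod.val_add, ← pow_eq_pow_mod _ hx, pow_add]

theorem pow_zmod_val_neg (hx : x ^ n = 1) (i : ZMod n) : x ^ (-i).val = (x ^ i.val)⁻¹ :=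
  eq_inv_of_mul_eq_one_left <| by
    rw [← pow_zmod_val_add hx, neg_add_cancel, ZMod.val_zero, pow_zero]

end ZModPow

namespace QuaternionGroup

variable {n : ℕ} [NeZero n]

theorem closure_a_one_xa_zero : closure {a 1, xa 0} = (⊤ : Subgroup (QuaternionGroup n)) := by
  have ha : ∀ i : ZMod (2 * n), a i ∈ closure {(a 1 : QuaternionGroup n), xa 0} := fun i => by
    rw [← ZMod.natCast_zmod_val i, ← a_one_pow]
    exact pow_mem (subset_closure (Set.mem_insert _ _)) _
  refine eq_top_iff.mpr fun g _ => ?_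
  rcases g with i | i
  · exact ha i
  · rw [show xa i = a (-i) * xa 0 by rw [a_mul_xa, zero_sub, neg_neg]]
    exact mul_mem (ha _) (subset_closure (Set.mem_insert_of_mem _ rfl))

variable {G : Type*} [Group G] {x y : G}

def homOfRelations (hx : x ^ (2 * n) = 1) (hyx : y * x * y⁻¹ = x⁻¹) (hy : y ^ 2 = x ^ n) :
    QuaternionGroup n →* G where
  toFun
    | a i => x ^ i.val
    | xa i => x ^ (-i).val * y
  map_one' := by
    show x ^ (0 : ZMod (2 * n)).val = 1
    rw [ZMod.val_zero, pow_zero]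
  map_mul' := by
    rintro (i | i) (j | j)
    · exact pow_zmod_val_add hx i j
    · show x ^ (-(j - i)).val * y = x ^ i.val * (x ^ (-j).val * y)
      rw [neg_sub, sub_eq_add_neg, pow_zmod_val_add hx, mul_assoc]
    · show x ^ (-(i + j)).val * y = x ^ (-i).val * y * x ^ j.val
      rw [mul_assoc, mul_pow_eq_inv_mul_of_conj_eq_inv hyx, neg_add, pow_zmod_val_add hx,
        pow_zmod_val_neg hx j, mul_assoc]
    · show x ^ ((n : ZMod (2 * n)) + j - i).val = x ^ (-i).val * y * (x ^ (-j).val * y)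
      rw [show (n : ZMod (2 * n)) + j - i = -i + j + n by ring, pow_zmod_val_add hx,
        pow_zmod_val_add hx, pow_zmod_val_natCast hx, mul_assoc _ y, ← mul_assoc y,
        mul_pow_eq_inv_mul_of_conj_eq_inv hyx, pow_zmod_val_neg hx j, inv_inv, mul_assoc _ y,
        ← sq, hy, mul_assoc]

theorem nonempty_mulEquiv_of_relations (hx : x ^ (2 * n) = 1) (hyx : y * x * y⁻¹ = x⁻¹)
    (hy : y ^ 2 = x ^ n) (hgen : closure {x, y} = ⊤) (hcard : Nat.card G = 4 * n) :
    Nonempty (G ≃* QuaternionGroup n) := by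
  set φ := homOfRelations hx hyx hy
  have hφx : φ (a 1) = x := by
    show x ^ (1 : ZMod (2 * n)).val = x
    rw [← Nat.cast_one, pow_zmod_val_natCast hx, pow_one]
  have hφy : φ (xa 0) = y := by
    show x ^ (-0 : ZMod (2 * n)).val * y = y
    rw [neg_zero, ZMod.val_zero, pow_zero, one_mul]
  have hsurj : Function.Surjective φ := by
    rw [← MonoidHom.range_eq_top, eq_top_iff, ← hgen, closure_le]
    rintro _ (rfl | rfl)
    exacts [⟨a 1, hφx⟩, ⟨xa 0, hφy⟩]
  have hbij : Function.Bijective φ := (Nat.bijective_iff_surjective_and_card φ).mpr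
    ⟨hsurj, by rw [hcard, Nat.card_eq_fintype_card, card]⟩
  exact ⟨(MulEquiv.ofBijective φ hbij).symm⟩

theorem commutator_two_le_zpowers_inf_zpowers :
    commutator (QuaternionGroup 2) ≤ zpowers (a 1) ⊓ zpowers (xa 0) := by
  have hcases : ∀ g h : QuaternionGroup 2, ⁅g, h⁆ = 1 ∨ ⁅g, h⁆ = a 2 := by decide
  have ha2 : a 2 ∈ zpowers (a 1) ⊓ zpowers (xa 0 : QuaternionGroup 2) :=
    ⟨⟨2, by decide⟩, ⟨2, by decide⟩⟩
  rw [commutator_def, commutator_le]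
  intro g _ h _
  rcases hcases g h with hgh | hgh <;> rw [hgh]
  exacts [one_mem _, ha2]

end QuaternionGroup

theorem commutator_le_center_of_surjective_quaternionGroup {G : Type*} [Group G]
    {f : G →* QuaternionGroup 2} (hf : Function.Surjective f) (hker : f.ker ≤ center G) :
    commutator G ≤ center G := by
  obtain ⟨a, ha⟩ := hf (QuaternionGroup.a 1)
  obtain ⟨b, hb⟩ := hf (QuaternionGroup.xa 0)
  have hgen : closure {a, b} ⊔ f.ker = ⊤ := f.closure_sup_ker_eq_top
    (by rw [Set.image_pair, ha, hb, QuaternionGroup.closure_a_one_xa_zero])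
  intro u hu
  -- `[Q₈, Q₈] = {±1}` lies in `⟨i⟩ ⊓ ⟨j⟩`, so modulo the central kernel `u` is a power of `a`,
  -- and also a power of `b`.
  have hfu : f u ∈ zpowers (f a) ⊓ zpowers (f b) := by
    rw [ha, hb]
    exact QuaternionGroup.commutator_two_le_zpowers_inf_zpowers
      (map_commutator_of_surjective hf ▸ mem_map_of_mem f hu)
  refine mem_center_of_forall_commute hker hgen ?_
  rintro _ (rfl | rfl)
  exacts [commute_of_map_mem_zpowers hker hfu.1, commute_of_map_mem_zpowers hker hfu.2]

theorem commutator_le_center_of_quotient {G : Type*} [Group G] {N : Subgroup G} [N.Normal]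
    (hN : N ≤ center G)
    (h : Nonempty (G ⧸ N ≃* Multiplicative (ZMod 2 × ZMod 2)) ∨
      Nonempty (G ⧸ N ≃* QuaternionGroup 2)) :
    commutator G ≤ center G := by
  rcases h with ⟨⟨e⟩⟩ | ⟨⟨e⟩⟩
  · refine (Abelianization.commutator_subset_ker
      (e.toMonoidHom.comp (QuotientGroup.mk' N))).trans ?_
    rwa [MonoidHom.ker_comp_of_injective _ _ e.injective, QuotientGroup.ker_mk']
  · refine commutator_le_center_of_surjective_quaternionGroup
      (f := e.toMonoidHom.comp (QuotientGroup.mk' N))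
      (e.surjective.comp (QuotientGroup.mk'_surjective N)) ?_
    rwa [MonoidHom.ker_comp_of_injective _ _ e.injective, QuotientGroup.ker_mk']

theorem sq_mem_commutator_of_mulEquiv {G : Type*} [Group G]
    (e : Abelianization G ≃* Multiplicative (ZMod 2 × ZMod 2)) (g : G) :
    g ^ 2 ∈ commutator G := by
  rw [← Abelianization.ker_of, MonoidHom.mem_ker, ← map_eq_one_iff e e.injective, map_pow,
    map_pow]
  exact (by decide : ∀ w : Multiplicative (ZMod 2 × ZMod 2), w ^ 2 = 1) _

def MulAut.IsTraceAnnihilating {G : Type*} [Group G] (σ : MulAut G) : Prop :=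
  ∀ x : G, x * σ x * σ (σ x) ∈ commutator G

namespace MulAut.IsTraceAnnihilating

variable {G : Type*} [Group G] {σ : MulAut G}

theorem quotient (htr : σ.IsTraceAnnihilating) {N : Subgroup G} [N.Normal]
    (hN : N.map σ.toMonoidHom = N) :
    MulAut.IsTraceAnnihilating (QuotientGroup.congr N N σ hN) := by
  rintro ⟨g⟩
  rw [← map_commutator_of_surjective (QuotientGroup.mk'_surjective N)]
  exact mem_map_of_mem (QuotientGroup.mk' N) (htr g)

theorem mem_commutator_of_abelianization_of_eq (htr : σ.IsTraceAnnihilating)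
    (hsq : ∀ g : G, g ^ 2 ∈ commutator G) {g : G}
    (h : Abelianization.of (σ g) = Abelianization.of g) : g ∈ commutator G := by
  have h2 : Abelianization.of (σ (σ g)) = Abelianization.of g := by
    rw [← abelianizationCongr_of, h, abelianizationCongr_of, h]
  have hcube : Abelianization.of g ^ 3 = 1 := by
    have ht := htr g
    rw [← Abelianization.ker_of, MonoidHom.mem_ker, map_mul, map_mul, h, h2] at ht
    rwa [pow_succ, sq]
  have hsq' : Abelianization.of g ^ 2 = 1 := by
    rw [← map_pow, ← MonoidHom.mem_ker, Abelianization.ker_of]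
    exact hsq g
  rw [← Abelianization.ker_of, MonoidHom.mem_ker]
  rwa [pow_succ, hsq', one_mul] at hcube

theorem closure_pair_sup_commutator_eq_top (htr : σ.IsTraceAnnihilating)
    (hsq : ∀ g : G, g ^ 2 ∈ commutator G) (hcard : Nat.card (Abelianization G) = 4) {a : G}
    (ha : a ∉ commutator G) : closure {σ a, a} ⊔ commutator G = ⊤ := by
  have hof : Abelianization.of a ≠ 1 := by
    rwa [Ne, ← MonoidHom.mem_ker, Abelianization.ker_of]
  rw [← Abelianization.ker_of]
  refine Abelianization.of.closure_sup_ker_eq_top ?_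
  rw [Set.image_pair]
  refine closure_pair_eq_top_of_card_eq_four hcard ?_ hof
    fun h => ha (htr.mem_commutator_of_abelianization_of_eq hsq h)
  rwa [← abelianizationCongr_of, map_ne_one_iff _ (MulEquiv.injective _)]

theorem sq_eq_commutatorElement (htr : σ.IsTraceAnnihilating)
    (hcen : commutator G ≤ center G) (hexp : ∀ u ∈ commutator G, u ^ 2 = 1)
    (hfix : ∀ u ∈ commutator G, σ u = u) {a : G} (ha : a ^ 2 ∈ commutator G) :
    a ^ 2 = ⁅σ a, a⁆ := by
  have hcomm : ∀ u ∈ commutator G, ∀ g : G, Commute u g := fun u hu g =>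
    (mem_center_iff.mp (hcen hu) g).symm
  have hσ : σ a ^ 2 = a ^ 2 := by rw [← map_pow, hfix _ ha]
  have hσσ : σ (σ a) ^ 2 = a ^ 2 := by rw [← map_pow, ← map_pow, hfix _ ha, hfix _ ha]
  have hc : ⁅σ a, a⁆ ∈ commutator G := commutator_mem_commutator (mem_top _) (mem_top _)
  have h1 : (a * σ a) ^ 2 = ⁅σ a, a⁆ := by
    rw [mul_sq_of_commute_commutatorElement (hcomm _ hc a), hσ, mul_assoc, ← sq, hexp _ ha,
      mul_one]
  have h2 : (a * σ a) ^ 2 = a ^ 2 := by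
    rw [show a * σ a = (a * σ a * σ (σ a)) * (σ (σ a))⁻¹ by group,
      (hcomm _ (htr a) _).mul_pow, hexp _ (htr a), one_mul, inv_pow, hσσ]
    exact inv_eq_of_mul_eq_one_right (by rw [← sq, hexp _ ha])
  exact h2.symm.trans h1

theorem nonempty_mulEquiv_quaternionGroup (htr : σ.IsTraceAnnihilating)
    (hsq : ∀ g : G, g ^ 2 ∈ commutator G) (hcard : Nat.card (Abelianization G) = 4)
    (hcen : commutator G ≤ center G) (hne : commutator G ≠ ⊥) :
    Nonempty (G ≃* QuaternionGroup 2) := by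
  obtain ⟨a, ha⟩ : ∃ a : G, a ∉ commutator G := by
    by_contra! h
    change Nat.card (G ⧸ commutator G) = 4 at hcard
    rw [← index_eq_card, (eq_top_iff.mpr fun g _ => h g : commutator G = ⊤), index_top] at hcard
    exact absurd hcard (by norm_num)
  set c := ⁅σ a, a⁆
  have hgen := htr.closure_pair_sup_commutator_eq_top hsq hcard ha
  have hG' : commutator G = zpowers c := commutator_eq_zpowers_of_closure_pair_sup_eq_top hcen
    hgen (hcen (commutator_mem_commutator (mem_top _) (mem_top _)))
  have hc2 : c ^ 2 = 1 := commutatorElement_sq_eq_one_of_commutator_le_center hcen (hsq a)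
  have hc1 : c ≠ 1 := fun h => hne (by rw [hG', h, zpowers_one_eq_bot])
  have helts : ∀ u ∈ commutator G, u = 1 ∨ u = c := fun u hu =>
    eq_one_or_eq_of_mem_zpowers hc2 (hG' ▸ hu)
  have hσc : σ c = c := by
    refine (helts _ ?_).resolve_left (by rwa [map_eq_one_iff _ σ.injective])
    rw [map_commutatorElement]
    exact commutator_mem_commutator (mem_top _) (mem_top _)
  have hfix : ∀ u ∈ commutator G, σ u = u := fun u hu => by
    rcases helts u hu with rfl | rfl
    exacts [map_one σ, hσc]
  have hexp : ∀ u ∈ commutator G, u ^ 2 = 1 := fun u hu => by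
    rcases helts u hu with rfl | rfl
    exacts [one_pow 2, hc2]
  have hs : a ^ 2 = c := htr.sq_eq_commutatorElement hcen hexp hfix (hsq a)
  refine QuaternionGroup.nonempty_mulEquiv_of_relations (x := a) (y := σ a) ?_ ?_ ?_ ?_ ?_
  · rw [pow_mul, hs, hc2]
  · calc σ a * a * (σ a)⁻¹ = c * a := by simp only [c, commutatorElement_def]; group
      _ = a⁻¹ := eq_inv_of_mul_eq_one_left (by rw [← hs, mul_assoc, ← sq, ← sq, hs, hc2])
  · rw [← map_pow, hfix _ (hsq a)]
  · rw [eq_top_iff, ← hgen, Set.pair_comm]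
    refine sup_le le_rfl (hG' ▸ zpowers_le.mpr ?_)
    exact hs ▸ pow_mem (subset_closure (Set.mem_insert _ _)) 2
  · rw [card_eq_card_quotient_mul_card_subgroup (commutator G)]
    congr 1
    rw [hG', Nat.card_zpowers, orderOf_eq_prime hc2 hc1]

end MulAut.IsTraceAnnihilating

theorem stmt_8_general (G : Type*) [Group G] [Finite G] (h2 : IsPGroup 2 G)
    (hab : Nonempty (Abelianization G ≃* Multiplicative (ZMod 2 × ZMod 2)))
    (σ : MulAut G)
    (htr : ∀ x : G, x * σ x * σ (σ x) ∈ commutator G) :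
    Nonempty (G ≃* Multiplicative (ZMod 2 × ZMod 2)) ∨
      Nonempty (G ≃* QuaternionGroup 2) := by
  induction hn : Nat.card G using Nat.strong_induction_on generalizing G with
  | _ n ih =>
  obtain ⟨e⟩ := hab
  by_cases hG' : commutator G = ⊥
  · exact Or.inl
      ⟨((QuotientGroup.quotientMulEquivOfEq hG').trans QuotientGroup.quotientBot).symm.trans e⟩
  have := h2.isNilpotent
  set N := commutator G ⊓ center G
  have hσN : N.map σ.toMonoidHom = N := characteristic_iff_map_eq.mp inferInstance σ
  have hlt : Nat.card (G ⧸ N) < n := hn ▸ card_quotient_lt (commutator_inf_center_ne_bot hG')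
  have hQ := ih _ hlt (G ⧸ N) (h2.to_quotient N)
    ⟨(Abelianization.quotientMulEquiv inf_le_left).trans e⟩ _
    (MulAut.IsTraceAnnihilating.quotient htr hσN) rfl
  have hcard : Nat.card (Abelianization G) = 4 := by
    rw [Nat.card_congr e.toEquiv, Nat.card_eq_fintype_card]; rfl
  exact Or.inr (MulAut.IsTraceAnnihilating.nonempty_mulEquiv_quaternionGroup htr
    (sq_mem_commutator_of_mulEquiv e) hcard (commutator_le_center_of_quotient inf_le_right hQ)
    hG')

/-- Derhem's theorem (group-theoretic form): a finite 2-group `G` with abelianization the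
Klein four-group which admits an automorphism `σ` of order 3 with
`x·σ(x)·σ²(x) ∈ [G,G]` for all `x` is isomorphic to the Klein four-group `ℤ/2 × ℤ/2`
or to the quaternion group `Q₈` (= `QuaternionGroup 2`). -/
theorem stmt_8 (G : Type*) [Group G] [Finite G] (h2 : IsPGroup 2 G)
    (hab : Nonempty (Abelianization G ≃* Multiplicative (ZMod 2 × ZMod 2)))
    (σ : MulAut G) (hσ : orderOf σ = 3)
    (htr : ∀ x : G, x * σ x * σ (σ x) ∈ commutator G) :
    Nonempty (G ≃* Multiplicative (ZMod 2 × ZMod 2)) ∨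
      Nonempty (G ≃* QuaternionGroup 2) :=
  stmt_8_general G h2 hab σ htr
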